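/- arXiv:1610.05913 — 4 statements merged into one kernel-verified Lean document; each statement's English description precedes it below -/
import Mathlib

section
/- Let k > 1, x ∈ ℝ² with r = |x|, t ≥ 4k with t ≥ 2r, |y| ≤ k, and define h(x,y,t) := √((t+r)(t−r)) − √(t²−|x−y|²). Then |h(x,y,t)| ≤ 2k. -/
theorem stmt_13 (k t : ℝ) (hk : 1 < k) (x y : EuclideanSpace ℝ (Fin 2))
    (r : ℝ) (hr : r = ‖x‖) (ht4 : 4 * k ≤ t) (ht2 : 2 * r ≤ t) (hy : ‖y‖ ≤ k) :
    |Real.sqrt ((t + r) * (t - r)) - Real.sqrt (t ^ 2 - ‖x - y‖ ^ 2)| ≤ 2 * k := by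
  have hk0 : (0:ℝ) < k := by linarith
  have hr0 : 0 ≤ r := hr ▸ norm_nonneg x
  set d := ‖x - y‖ with hd
  have hd0 : 0 ≤ d := norm_nonneg _
  have hdle : d ≤ r + k := by
    calc d ≤ ‖x‖ + ‖y‖ := norm_sub_le x y
    _ ≤ r + k := by rw [hr]; linarith
  have hdge : r - k ≤ d := by
    have := norm_sub_norm_le x y
    rw [← hr] at this; linarith
  have hb2 : 0 ≤ t ^ 2 - d ^ 2 := by nlinarith
  set a := Real.sqrt ((t + r) * (t - r)) with ha
  set b := Real.sqrt (t ^ 2 - d ^ 2) with hb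
  have ha0 : 0 ≤ a := Real.sqrt_nonneg _
  have hb0 : 0 ≤ b := Real.sqrt_nonneg _
  have hasq : a ^ 2 = (t + r) * (t - r) := Real.sq_sqrt (by nlinarith)
  have hbsq : b ^ 2 = t ^ 2 - d ^ 2 := Real.sq_sqrt hb2
  have har : r ≤ a := by nlinarith [hasq, ha0]
  have hrb : r ≤ 2 * b := by nlinarith [hbsq, hb0, mul_self_le_mul_self hd0 hdle]
  have h1 : a ≤ b + 2 * k := by
    have key : (t + r) * (t - r) ≤ (b + 2 * k) ^ 2 := by
      nlinarith [hbsq, mul_le_mul_of_nonneg_left hrb hk0.le,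
        mul_self_le_mul_self hd0 hdle]
    calc a ≤ Real.sqrt ((b + 2 * k) ^ 2) := Real.sqrt_le_sqrt key
    _ = b + 2 * k := Real.sqrt_sq (by linarith)
  have h2 : b ≤ a + 2 * k := by
    have key : t ^ 2 - d ^ 2 ≤ (a + 2 * k) ^ 2 := by
      nlinarith [hasq, har, mul_nonneg (show (0:ℝ) ≤ k - (r - d) by linarith)
        (show (0:ℝ) ≤ r + d by linarith), mul_le_mul_of_nonneg_left hdle hk0.le]
    calc b ≤ Real.sqrt ((a + 2 * k) ^ 2) := Real.sqrt_le_sqrt key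
    _ = a + 2 * k := Real.sqrt_sq (by linarith)
  rw [abs_sub_le_iff]
  constructor <;> linarith
end

section
/- Let k > 1, t ≥ 4k, t ≥ 2r where r = |x|, x ∈ ℝ², and g ∈ L¹(ℝ²) with support in {|y| ≤ k}. Then |∫_{ℝ²} t·g(y)/(t²−|x−y|²)^{3/2} dy| ≤ 4‖g‖_{L¹}/(√(t+r)·(t−r)^{3/2}). -/
open MeasureTheory

set_option maxHeartbeats 1000000

theorem stmt_14 (k t : ℝ) (hk : 1 < k) (x : EuclideanSpace ℝ (Fin 2))
    (r : ℝ) (hr : r = ‖x‖) (ht4 : 4 * k ≤ t) (ht2 : 2 * r ≤ t)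
    (g : EuclideanSpace ℝ (Fin 2) → ℝ) (hg : Integrable g)
    (hsupp : Function.support g ⊆ Metric.closedBall 0 k) :
    |∫ y, t * g y / (t ^ 2 - ‖x - y‖ ^ 2) ^ ((3 : ℝ) / 2)| ≤
      4 * (∫ y, |g y|) / (Real.sqrt (t + r) * (t - r) ^ ((3 : ℝ) / 2)) := by
  have hr0 : 0 ≤ r := hr ▸ norm_nonneg x
  have ht0 : 0 < t := by linarith
  have ha : 0 < t - r := by linarith
  have hb : 0 < t + r := by linarith
  have hsb : 0 ≤ Real.sqrt (t + r) := Real.sqrt_nonneg _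
  have hsa : 0 ≤ (t - r) ^ ((3:ℝ)/2) := Real.rpow_nonneg ha.le _
  have hden : 0 < Real.sqrt (t + r) * (t - r) ^ ((3:ℝ)/2) :=
    mul_pos (Real.sqrt_pos.mpr hb) (Real.rpow_pos_of_pos ha _)
  set C : ℝ := 4 / (Real.sqrt (t + r) * (t - r) ^ ((3:ℝ)/2)) with hC
  have hCnn : 0 ≤ C := div_nonneg (by norm_num) hden.le
  -- key pointwise bound
  have hbound : ∀ y, |t * g y / (t ^ 2 - ‖x - y‖ ^ 2) ^ ((3:ℝ)/2)| ≤ C * |g y| := by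
    intro y
    by_cases hgy : g y = 0
    · simp [hgy]
    · have hy : ‖y‖ ≤ k := by
        have := hsupp hgy
        simpa [Metric.mem_closedBall, dist_zero_right] using this
      have hxy : ‖x - y‖ ≤ r + k := by
        calc ‖x - y‖ ≤ ‖x‖ + ‖y‖ := norm_sub_le x y
        _ ≤ r + k := by rw [hr]; linarith
      have hxy2 : ‖x - y‖ ^ 2 ≤ (r + k) ^ 2 := by
        apply pow_le_pow_left₀ (norm_nonneg _) hxy
      have hq : (t - r) * (t + r) / 2 ≤ t ^ 2 - ‖x - y‖ ^ 2 := by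
        nlinarith [mul_nonneg (by linarith : (0:ℝ) ≤ t - r - 2 * k) hb.le,
          mul_nonneg (by linarith : (0:ℝ) ≤ k) (by linarith : (0:ℝ) ≤ t - r - k)]
      have habpos : 0 < (t - r) * (t + r) / 2 := by positivity
      have hpos : 0 < t ^ 2 - ‖x - y‖ ^ 2 := lt_of_lt_of_le habpos hq
      have hDpos : 0 < (t ^ 2 - ‖x - y‖ ^ 2) ^ ((3:ℝ)/2) := Real.rpow_pos_of_pos hpos _
      have hD : ((t - r) * (t + r) / 2) ^ ((3:ℝ)/2) ≤ (t ^ 2 - ‖x - y‖ ^ 2) ^ ((3:ℝ)/2) :=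
        Real.rpow_le_rpow habpos.le hq (by norm_num)
      have hQpos : 0 < ((t - r) * (t + r) / 2) ^ ((3:ℝ)/2) := Real.rpow_pos_of_pos habpos _
      -- fraction bound
      have hfrac : t / (t ^ 2 - ‖x - y‖ ^ 2) ^ ((3:ℝ)/2) ≤ C := by
        have step1 : t / (t ^ 2 - ‖x - y‖ ^ 2) ^ ((3:ℝ)/2)
            ≤ t / ((t - r) * (t + r) / 2) ^ ((3:ℝ)/2) :=
          div_le_div_of_nonneg_left ht0.le hQpos hD
        refine step1.trans ?_
        rw [hC, div_le_div_iff₀ hQpos hden]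
        have hbb : (t + r) ^ ((3:ℝ)/2) = (t + r) * Real.sqrt (t + r) := by
          rw [Real.sqrt_eq_rpow, show (3:ℝ)/2 = 1 + 1/2 by norm_num,
            Real.rpow_add hb, Real.rpow_one]
        have hQ : ((t - r) * (t + r) / 2) ^ ((3:ℝ)/2)
            = (t - r) ^ ((3:ℝ)/2) * ((t + r) * Real.sqrt (t + r)) / 2 ^ ((3:ℝ)/2) := by
          rw [Real.div_rpow (mul_nonneg ha.le hb.le) (by norm_num),
            Real.mul_rpow ha.le hb.le, hbb]
        rw [hQ]
        have h2pos : (0:ℝ) < 2 ^ ((3:ℝ)/2) := Real.rpow_pos_of_pos two_pos _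
        have h2le : (2:ℝ) ^ ((3:ℝ)/2) ≤ 3 := by
          have : (2:ℝ) ^ ((3:ℝ)/2) = 2 * Real.sqrt 2 := by
            rw [Real.sqrt_eq_rpow, show (3:ℝ)/2 = 1 + 1/2 by norm_num,
              Real.rpow_add two_pos, Real.rpow_one]
          rw [this]
          nlinarith [Real.sq_sqrt (by norm_num : (0:ℝ) ≤ 2), Real.sqrt_nonneg 2]
        rw [← mul_div_assoc, le_div_iff₀ h2pos]
        set sa := (t - r) ^ ((3:ℝ)/2) with hsa'
        set sb := Real.sqrt (t + r) with hsb'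
        set c := (2:ℝ) ^ ((3:ℝ)/2) with hc'
        have htb : t * c ≤ 3 * (t + r) := by nlinarith
        nlinarith [mul_nonneg (mul_nonneg hsa hsb) hb.le,
          mul_le_mul_of_nonneg_left htb (mul_nonneg hsa hsb)]
      have heq : |t * g y / (t ^ 2 - ‖x - y‖ ^ 2) ^ ((3:ℝ)/2)|
          = t / (t ^ 2 - ‖x - y‖ ^ 2) ^ ((3:ℝ)/2) * |g y| := by
        rw [abs_div, abs_mul, abs_of_pos ht0, abs_of_pos hDpos]
        ring
      rw [heq]
      exact mul_le_mul_of_nonneg_right hfrac (abs_nonneg _)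
  calc |∫ y, t * g y / (t ^ 2 - ‖x - y‖ ^ 2) ^ ((3:ℝ)/2)|
      ≤ ∫ y, |t * g y / (t ^ 2 - ‖x - y‖ ^ 2) ^ ((3:ℝ)/2)| := by
        simpa [Real.norm_eq_abs] using norm_integral_le_integral_norm (fun y => t * g y / (t ^ 2 - ‖x - y‖ ^ 2) ^ ((3:ℝ)/2))
    _ ≤ ∫ y, C * |g y| := by
        apply integral_mono_of_nonneg (Filter.Eventually.of_forall fun y => abs_nonneg _)
          (hg.abs.const_mul C) (Filter.Eventually.of_forall hbound)
    _ = C * ∫ y, |g y| := integral_const_mul C _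
    _ = 4 * (∫ y, |g y|) / (Real.sqrt (t + r) * (t - r) ^ ((3:ℝ)/2)) := by
        rw [hC]; ring
end

section
/- Let k > 1, x ∈ ℝ², r = |x|, t ≥ 2r, t ≥ 4k, and g ∈ L¹(ℝ²) supported in {|y| ≤ k}. Then |∫_{ℝ²} g(y)/√(t²−|x−y|²) dy − (1/√((t+r)(t−r)))∫_{ℝ²} g(y) dy| ≤ 4k‖g‖_{L¹}/((t+r)(t−r)). -/
open MeasureTheory

/-!
On the support of `g` the distance `s = ‖x - y‖` is within `k` of `r`, so with
`a = √(t² - s²)` and `b = √(t² - r²)` one has `1/a - 1/b = (s² - r²) / (a b (a + b))` and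
`|s² - r²| ≤ k (2r + k)`. Since `t ≥ 2r` and `t ≥ 4k`, `a` stays comparable to `t ≥ b`, which makes
the kernel `1/a` differ from the constant `1/b` by at most `4k / b²`; integrating this pointwise
bound against `|g|` gives the estimate.
-/

theorem abs_one_div_sqrt_sub_one_div_sqrt_le {t r s k : ℝ} (hr : 0 ≤ r) (hs : 0 ≤ s)
    (hsr : |s - r| ≤ k) (ht2 : 2 * r ≤ t) (ht4 : 4 * k ≤ t) :
    |1 / √(t ^ 2 - s ^ 2) - 1 / √((t + r) * (t - r))| ≤ 4 * k / ((t + r) * (t - r)) := by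
  obtain ⟨hsr_lo, hsr_hi⟩ := abs_le.1 hsr
  rcases (abs_nonneg _).trans hsr |>.eq_or_lt with rfl | hk
  · obtain rfl : s = r := by linarith
    simp [sq, ← mul_self_sub_mul_self]
  have hb2 : √((t + r) * (t - r)) ^ 2 = (t + r) * (t - r) := Real.sq_sqrt (by nlinarith)
  have ha2 : √(t ^ 2 - s ^ 2) ^ 2 = t ^ 2 - s ^ 2 := Real.sq_sqrt (by nlinarith)
  set a := √(t ^ 2 - s ^ 2)
  set b := √((t + r) * (t - r))
  have ha : 0 < a := Real.sqrt_pos.2 (by nlinarith)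
  have hb : 0 < b := Real.sqrt_pos.2 (by nlinarith)
  have hbt : b ≤ t := by nlinarith
  have hdiff : 1 / a - 1 / b = (s - r) * (s + r) / (a * b * (a + b)) := by
    field_simp
    nlinarith
  have hnum : |(s - r) * (s + r)| ≤ k * (2 * r + k) := by
    rw [abs_mul, abs_of_nonneg (by linarith : 0 ≤ s + r)]
    exact mul_le_mul hsr (by linarith) (by linarith) hk.le
  have hden : (2 * r + k) * b ^ 2 ≤ 4 * (a * b * (a + b)) := by
    -- `s ≤ r + k ≤ 3t/4` gives `4a² ≥ 7t²/4`, while `(2r + k) b ≤ 5t²/4`.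
    have h1 : (2 * r + k) * b ≤ 4 * a ^ 2 := by nlinarith
    nlinarith [mul_le_mul_of_nonneg_right h1 hb.le, mul_pos (mul_pos ha hb) hb]
  have hden_pos : 0 < a * b * (a + b) := by positivity
  rw [hdiff, abs_div, abs_of_pos hden_pos, ← hb2, div_le_div_iff₀ hden_pos (by positivity)]
  nlinarith [mul_le_mul_of_nonneg_right hnum (sq_nonneg b), mul_le_mul_of_nonneg_left hden hk.le]

theorem abs_integral_sub_mul_integral_le {α : Type*} [MeasurableSpace α] {μ : Measure α}
    {f g : α → ℝ} {c C : ℝ} (hf : AEStronglyMeasurable f μ) (hg : Integrable g μ)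
    (hfg : ∀ y, |f y - c * g y| ≤ C * |g y|) :
    |(∫ y, f y ∂μ) - c * ∫ y, g y ∂μ| ≤ C * ∫ y, |g y| ∂μ := by
  have hdiff : Integrable (fun y ↦ f y - c * g y) μ :=
    (hg.abs.const_mul C).mono' (hf.sub (hg.const_mul c).1) (.of_forall hfg)
  have hf_int : Integrable f μ :=
    (hdiff.add (hg.const_mul c)).congr (.of_forall fun y ↦ sub_add_cancel _ _)
  calc |(∫ y, f y ∂μ) - c * ∫ y, g y ∂μ| = |∫ y, (f y - c * g y) ∂μ| := by
        rw [integral_sub hf_int (hg.const_mul c), integral_const_mul]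
    _ ≤ ∫ y, |f y - c * g y| ∂μ := abs_integral_le_integral_abs
    _ ≤ ∫ y, C * |g y| ∂μ := integral_mono hdiff.abs (hg.abs.const_mul C) hfg
    _ = C * ∫ y, |g y| ∂μ := integral_const_mul C _

theorem stmt_15_general (k t : ℝ) (x : EuclideanSpace ℝ (Fin 2))
    (r : ℝ) (hr : r = ‖x‖) (ht4 : 4 * k ≤ t) (ht2 : 2 * r ≤ t)
    (g : EuclideanSpace ℝ (Fin 2) → ℝ) (hg : Integrable g)
    (hsupp : Function.support g ⊆ Metric.closedBall 0 k) :
    |(∫ y, g y / Real.sqrt (t ^ 2 - ‖x - y‖ ^ 2)) -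
        (1 / Real.sqrt ((t + r) * (t - r))) * ∫ y, g y| ≤
      4 * k * (∫ y, |g y|) / ((t + r) * (t - r)) := by
  have hpoint : ∀ y, |g y / √(t ^ 2 - ‖x - y‖ ^ 2) - 1 / √((t + r) * (t - r)) * g y| ≤
      4 * k / ((t + r) * (t - r)) * |g y| := by
    intro y
    by_cases hy : g y = 0
    · simp [hy]
    have hyk : ‖y‖ ≤ k := by simpa using hsupp hy
    have hdist : |‖x - y‖ - r| ≤ k := by
      subst hr
      simpa using (abs_norm_sub_norm_le (x - y) x).trans (by simpa using hyk)
    rw [div_eq_mul_one_div, mul_comm, ← sub_mul, abs_mul]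
    exact mul_le_mul_of_nonneg_right
      (abs_one_div_sqrt_sub_one_div_sqrt_le (hr ▸ norm_nonneg x) (norm_nonneg _) hdist ht2 ht4)
      (abs_nonneg _)
  have hmeas : AEStronglyMeasurable (fun y ↦ g y / √(t ^ 2 - ‖x - y‖ ^ 2)) volume :=
    hg.1.mul (by fun_prop : Measurable fun y ↦ (√(t ^ 2 - ‖x - y‖ ^ 2))⁻¹).aestronglyMeasurable
  calc _ ≤ 4 * k / ((t + r) * (t - r)) * ∫ y, |g y| :=
        abs_integral_sub_mul_integral_le hmeas hg hpoint
    _ = _ := by ring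

theorem stmt_15 (k t : ℝ) (hk : 1 < k) (x : EuclideanSpace ℝ (Fin 2))
    (r : ℝ) (hr : r = ‖x‖) (ht4 : 4 * k ≤ t) (ht2 : 2 * r ≤ t)
    (g : EuclideanSpace ℝ (Fin 2) → ℝ) (hg : Integrable g)
    (hsupp : Function.support g ⊆ Metric.closedBall 0 k) :
    |(∫ y, g y / Real.sqrt (t ^ 2 - ‖x - y‖ ^ 2)) -
        (1 / Real.sqrt ((t + r) * (t - r))) * ∫ y, g y| ≤
      4 * k * (∫ y, |g y|) / ((t + r) * (t - r)) :=
  stmt_15_general k t x r hr ht4 ht2 g hg hsupp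
end

section
/- For reals s, ρ with ρ ≤ −2k < 0, k > 1, |s| ≤ 5k/4, and z ≥ 0 one has |1/√(s−ρ+ρ²z/2) − 1/√(−ρ+ρ²z/2)| ≤ |s|/(|ρ|·√(s+|ρ|)). -/
open Real

/-- Rationalising, `1/√x - 1/√y = (y - x) / (√x √y (√x + √y))`, and `√y (√x + √y) ≥ y`. -/
lemma abs_one_div_sqrt_sub_one_div_sqrt_le_s16 {x y : ℝ} (hx : 0 < x) (hy : 0 < y) :
    |1 / √x - 1 / √y| ≤ |x - y| / (y * √x) := by
  have hsx : 0 < √x := sqrt_pos.mpr hx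
  have hsy : 0 < √y := sqrt_pos.mpr hy
  have hdiff : 1 / √x - 1 / √y = (y - x) / (√x * √y * (√x + √y)) := by
    field_simp
    linear_combination sq_sqrt hy.le - sq_sqrt hx.le
  have hden : y * √x ≤ √x * √y * (√x + √y) := by
    nlinarith [mul_self_sqrt hy.le, mul_pos (mul_pos hsx hsy) hsx]
  rw [hdiff, abs_div, abs_sub_comm, abs_of_pos (by positivity : 0 < √x * √y * (√x + √y))]
  exact div_le_div_of_nonneg_left (abs_nonneg _) (by positivity) hden

theorem stmt_16 (s ρ z k : ℝ) (hk : 1 < k) (hρ : ρ ≤ -2 * k)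
    (hs : |s| ≤ 5 * k / 4) (hz : 0 ≤ z) :
    |1 / Real.sqrt (s - ρ + ρ ^ 2 * z / 2) - 1 / Real.sqrt (-ρ + ρ ^ 2 * z / 2)| ≤
      |s| / (|ρ| * Real.sqrt (s + |ρ|)) := by
  have hρ_neg : ρ < 0 := by linarith
  have hρ_lt_s : ρ < s := by linarith [neg_abs_le s]
  have hc : 0 ≤ ρ ^ 2 * z / 2 := by positivity
  have hsqrt : 0 < √(s + -ρ) := sqrt_pos.mpr (by linarith)
  rw [abs_of_neg hρ_neg]
  calc _ ≤ |s - ρ + ρ ^ 2 * z / 2 - (-ρ + ρ ^ 2 * z / 2)| /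
        ((-ρ + ρ ^ 2 * z / 2) * √(s - ρ + ρ ^ 2 * z / 2)) :=
        abs_one_div_sqrt_sub_one_div_sqrt_le_s16 (by linarith) (by linarith)
    _ = |s| / ((-ρ + ρ ^ 2 * z / 2) * √(s - ρ + ρ ^ 2 * z / 2)) := by ring_nf
    _ ≤ |s| / (-ρ * √(s + -ρ)) := by
        apply div_le_div_of_nonneg_left (abs_nonneg s) (mul_pos (by linarith) hsqrt)
        exact mul_le_mul (by linarith) (sqrt_le_sqrt (by linarith)) hsqrt.le (by linarith)
end
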